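/- Suppose σ = θ·ς₁·ω^d(ς₂) with ς₁ς₂ = ς₂ς₁ = τ in S_d, and let a = τ^k · ω^d(τ^ℓ) for integers k, ℓ. Then (σa)² = τ^{k+ℓ+1} · ω^d(τ^{k+ℓ+1}). -/

import Mathlib

/-- The shift of a permutation of `ℕ` up by `d`: fixes `{0,…,d-1}` and acts as `σ`
conjugated by `k ↦ k + d` above. -/
def shift (d : ℕ) (σ : Equiv.Perm ℕ) : Equiv.Perm ℕ where
  toFun k := if k < d then k else σ (k - d) + d
  invFun k := if k < d then k else σ⁻¹ (k - d) + d
  left_inv k := by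
    by_cases h : k < d
    · simp [h]
    · dsimp only
      rw [if_neg h, if_neg (by omega), Nat.add_sub_cancel, Equiv.Perm.inv_eq_iff_eq.mpr rfl]
      omega
  right_inv k := by
    by_cases h : k < d
    · simp [h]
    · dsimp only
      rw [if_neg h, if_neg (by omega), Nat.add_sub_cancel, Equiv.Perm.eq_inv_iff_eq.mp rfl]
      omega

/-- The involution of `ℕ` swapping the blocks `{0,…,d-1}` and `{d,…,2d-1}`. -/
def theta (d : ℕ) : Equiv.Perm ℕ :=
  Function.Involutive.toPerm
    (fun k => if k < d then k + d else if k < 2 * d then k - d else k)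
    (by intro k; dsimp only; split_ifs <;> omega)

/-!
Write `ω` for `shift d` and `L` for the permutations fixing every `k ≥ d`. Conjugation by the
block swap `θ` interchanges `x ∈ L` and `ω x`, and `L` commutes with the image of `ω`. Hence
for `x y ∈ L` one gets `θ x ω(y) θ = ω(x) y`, so `(θ x ω(y))² = y x · ω(x y)`. Since
`σ a = θ (ς₁ τ^k) ω(ς₂ τ^ℓ)`, both products `y x` and `x y` collapse to `τ^(k+ℓ+1)`, because
`ς₁` and `ς₂` commute with `τ`.
-/

theorem mul_zpow_mul_mul_zpow_of_mul_eq {G : Type*} [Group G] {a b c : G}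
    (h : a * b = c) (h' : b * a = c) (k l : ℤ) :
    a * c ^ k * (b * c ^ l) = c ^ (k + l + 1) := by
  have hbc : Commute b c := by
    show b * c = c * b
    rw [← h, ← mul_assoc, h', ← h]
  calc a * c ^ k * (b * c ^ l) = a * b * (c ^ k * c ^ l) := by
        simp only [mul_assoc]
        rw [← mul_assoc (c ^ k) b, ← (hbc.zpow_right k).eq, mul_assoc]
    _ = c ^ (k + l + 1) := by rw [h, ← zpow_add, ← zpow_one_add, add_comm]

lemma shift_apply (d : ℕ) (σ : Equiv.Perm ℕ) (k : ℕ) :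
    shift d σ k = if k < d then k else σ (k - d) + d := rfl

lemma theta_apply (d : ℕ) (k : ℕ) :
    theta d k = if k < d then k + d else if k < 2 * d then k - d else k := rfl

lemma shift_mul (d : ℕ) (σ τ : Equiv.Perm ℕ) :
    shift d (σ * τ) = shift d σ * shift d τ := by
  ext m
  simp only [Equiv.Perm.mul_apply, shift_apply]
  by_cases h : m < d
  · simp [h]
  · rw [if_neg h, if_neg h, if_neg (by omega), Nat.add_sub_cancel]

lemma theta_mul_self (d : ℕ) : theta d * theta d = 1 := by
  ext m
  simp only [Equiv.Perm.mul_apply, theta_apply, Equiv.Perm.one_apply]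
  split_ifs <;> omega

section LowerBlock

variable {d : ℕ} {x : Equiv.Perm ℕ}

lemma apply_eq_self_of_mem_fixingSubgroup_Ici
    (hx : x ∈ fixingSubgroup (Equiv.Perm ℕ) (Set.Ici d))
    {m : ℕ} (hm : d ≤ m) : x m = m :=
  mem_fixingSubgroup_iff _ |>.mp hx m hm

lemma apply_lt_of_mem_fixingSubgroup_Ici
    (hx : x ∈ fixingSubgroup (Equiv.Perm ℕ) (Set.Ici d))
    {m : ℕ} (hm : m < d) : x m < d := by
  by_contra hge
  have hxm := apply_eq_self_of_mem_fixingSubgroup_Ici hx (not_lt.mp hge)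
  rw [x.injective hxm] at hge
  exact hge hm

lemma commute_shift_of_mem_fixingSubgroup_Ici
    (hx : x ∈ fixingSubgroup (Equiv.Perm ℕ) (Set.Ici d)) (y : Equiv.Perm ℕ) :
    Commute x (shift d y) := by
  ext m
  simp only [Equiv.Perm.mul_apply, shift_apply]
  by_cases hm : m < d
  · rw [if_pos hm, if_pos (apply_lt_of_mem_fixingSubgroup_Ici hx hm)]
  · rw [if_neg hm, apply_eq_self_of_mem_fixingSubgroup_Ici hx (not_lt.mp hm), if_neg hm,
      apply_eq_self_of_mem_fixingSubgroup_Ici hx (by omega)]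

lemma theta_mul_of_mem_fixingSubgroup_Ici
    (hx : x ∈ fixingSubgroup (Equiv.Perm ℕ) (Set.Ici d)) :
    theta d * x = shift d x * theta d := by
  ext m
  simp only [Equiv.Perm.mul_apply, shift_apply, theta_apply]
  by_cases hm : m < d
  · rw [if_pos hm, if_pos (apply_lt_of_mem_fixingSubgroup_Ici hx hm),
      if_neg (show ¬ m + d < d by omega), Nat.add_sub_cancel]
  · have hxm := apply_eq_self_of_mem_fixingSubgroup_Ici hx (not_lt.mp hm)
    by_cases hm2 : m < 2 * d
    · rw [hxm, if_neg hm, if_pos hm2, if_pos (show m - d < d by omega)]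
    · rw [hxm, if_neg hm, if_neg hm2,
        apply_eq_self_of_mem_fixingSubgroup_Ici hx (show d ≤ m - d by omega), if_neg hm]
      omega

lemma mul_theta_of_mem_fixingSubgroup_Ici
    (hx : x ∈ fixingSubgroup (Equiv.Perm ℕ) (Set.Ici d)) :
    x * theta d = theta d * shift d x := by
  calc x * theta d = theta d * (theta d * x) * theta d := by
        rw [← mul_assoc, theta_mul_self, one_mul]
    _ = theta d * shift d x := by
        rw [theta_mul_of_mem_fixingSubgroup_Ici hx, mul_assoc, mul_assoc, theta_mul_self,
          mul_one]

lemma theta_mul_mul_shift_sq {y : Equiv.Perm ℕ}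
    (hx : x ∈ fixingSubgroup (Equiv.Perm ℕ) (Set.Ici d))
    (hy : y ∈ fixingSubgroup (Equiv.Perm ℕ) (Set.Ici d)) :
    (theta d * x * shift d y) ^ 2 = y * x * shift d (x * y) := by
  have hconj : theta d * x * shift d y * theta d = shift d x * y := by
    rw [mul_assoc _ (shift d y), ← theta_mul_of_mem_fixingSubgroup_Ici hy, mul_assoc (theta d),
      ← mul_assoc x, mul_theta_of_mem_fixingSubgroup_Ici hx, ← mul_assoc, ← mul_assoc,
      theta_mul_self, one_mul]
  calc (theta d * x * shift d y) ^ 2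
      = (theta d * x * shift d y * theta d) * x * shift d y := by
        rw [sq]; group
    _ = y * x * shift d (x * y) := by
        have hcomm : Commute (y * x) (shift d x) :=
          (commute_shift_of_mem_fixingSubgroup_Ici hy x).mul_left
            (commute_shift_of_mem_fixingSubgroup_Ici hx x)
        rw [hconj, shift_mul, mul_assoc (shift d x), hcomm.symm.eq, mul_assoc (y * x)]

end LowerBlock

theorem stmt_5_general (d : ℕ) (ς₁ ς₂ τ : Equiv.Perm ℕ)
    (h₁ : ∀ k, d ≤ k → ς₁ k = k) (h₂ : ∀ k, d ≤ k → ς₂ k = k)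
    (hτ : ς₁ * ς₂ = τ) (hτ' : ς₂ * ς₁ = τ)
    (σ : Equiv.Perm ℕ) (hσ : σ = theta d * ς₁ * shift d ς₂)
    (k ℓ : ℤ) (a : Equiv.Perm ℕ) (ha : a = τ ^ k * shift d (τ ^ ℓ)) :
    (σ * a) * (σ * a) = τ ^ (k + ℓ + 1) * shift d (τ ^ (k + ℓ + 1)) := by
  subst hσ ha
  set L := fixingSubgroup (Equiv.Perm ℕ) (Set.Ici d)
  have hς₁ : ς₁ ∈ L := mem_fixingSubgroup_iff _ |>.mpr h₁
  have hς₂ : ς₂ ∈ L := mem_fixingSubgroup_iff _ |>.mpr h₂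
  have hτL : τ ∈ L := hτ ▸ L.mul_mem hς₁ hς₂
  have hσa : theta d * ς₁ * shift d ς₂ * (τ ^ k * shift d (τ ^ ℓ))
      = theta d * (ς₁ * τ ^ k) * shift d (ς₂ * τ ^ ℓ) := by
    simp only [shift_mul, mul_assoc]
    rw [← mul_assoc (shift d ς₂) (τ ^ k),
      ← (commute_shift_of_mem_fixingSubgroup_Ici (L.zpow_mem hτL k) ς₂).eq, mul_assoc]
  rw [← sq, hσa, theta_mul_mul_shift_sq (L.mul_mem hς₁ (L.zpow_mem hτL k))
    (L.mul_mem hς₂ (L.zpow_mem hτL ℓ)), mul_zpow_mul_mul_zpow_of_mul_eq hτ hτ',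
    mul_zpow_mul_mul_zpow_of_mul_eq hτ' hτ, add_comm ℓ]

/-- If `σ = θ·ς₁·ω^d(ς₂)` with `ς₁ς₂ = ς₂ς₁ = τ`, and `a = τ^k·ω^d(τ^ℓ)` for
integers `k, ℓ`, then `(σa)² = τ^(k+ℓ+1)·ω^d(τ^(k+ℓ+1))`. -/
theorem stmt_5 (d : ℕ) (hd : 2 ≤ d) (ς₁ ς₂ τ : Equiv.Perm ℕ)
    (h₁ : ∀ k, d ≤ k → ς₁ k = k) (h₂ : ∀ k, d ≤ k → ς₂ k = k)
    (hτ : ς₁ * ς₂ = τ) (hτ' : ς₂ * ς₁ = τ)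
    (σ : Equiv.Perm ℕ) (hσ : σ = theta d * ς₁ * shift d ς₂)
    (k ℓ : ℤ) (a : Equiv.Perm ℕ) (ha : a = τ ^ k * shift d (τ ^ ℓ)) :
    (σ * a) * (σ * a) = τ ^ (k + ℓ + 1) * shift d (τ ^ (k + ℓ + 1)) :=
  stmt_5_general d ς₁ ς₂ τ h₁ h₂ hτ hτ' σ hσ k ℓ a ha
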